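/- (Semidefinite reformulation by fictitious loads.) Let K₁,…,K_m be symmetric positive semidefinite real n×n matrices, let {1,…,m} = 𝒟₁ ∪ 𝒟₂ with 𝒟₁ ∩ 𝒟₂ = ∅, let N₁, N₂ ⊆ {1,…,n} with N₁ ∪ N₂ = {1,…,n} be such that K_i is supported on N_k for every i ∈ 𝒟_k (k = 1,2), and let f⁽¹⁾, f⁽²⁾ ∈ ℝⁿ be supported on N₁ and N₂ respectively, with f = f⁽¹⁾ + f⁽²⁾. Let x ∈ ℝ^m with x_i ≥ 0 for all i, and γ ∈ ℝ. Then the block matrix [Σ_{i=1}^m x_i K_i, f; fᵀ, γ] is positive semidefinite if and only if there exist γ₁, γ₂ ∈ ℝ with γ₁ + γ₂ = γ and a vector g ∈ ℝⁿ supported on N₁ ∩ N₂ such that both block matrices [Σ_{i∈𝒟₁} x_i K_i, f⁽¹⁾ + g; (f⁽¹⁾ + g)ᵀ, γ₁] and [Σ_{i∈𝒟₂} x_i K_i, f⁽²⁾ − g; (f⁽²⁾ − g)ᵀ, γ₂] are positive semidefinite. -/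

import Mathlib

open Matrix

/-- An `n×n` matrix is supported on `I` if `Y i j = 0` whenever `i ∉ I` or `j ∉ I`. -/
def MatSupportedOn {n : ℕ} (Y : Matrix (Fin n) (Fin n) ℝ) (I : Finset (Fin n)) : Prop :=
  ∀ i j, (i ∉ I ∨ j ∉ I) → Y i j = 0

/-- A vector is supported on `I` if `v i = 0` for every `i ∉ I`. -/
def VecSupportedOn {n : ℕ} (v : Fin n → ℝ) (I : Finset (Fin n)) : Prop :=
  ∀ i, i ∉ I → v i = 0

/-- The symmetric `(n+1)×(n+1)` block matrix `[K, b; bᵀ, c]`. -/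
def ArrowMat {n : ℕ} (K : Matrix (Fin n) (Fin n) ℝ) (b : Fin n → ℝ) (c : ℝ) :
    Matrix (Fin n ⊕ Unit) (Fin n ⊕ Unit) ℝ :=
  Matrix.fromBlocks K (Matrix.of fun i (_ : Unit) => b i)
    (Matrix.of fun (_ : Unit) j => b j) (Matrix.of fun (_ _ : Unit) => c)

/-! Put `A = A₁ + A₂` with `A_k = ∑_{i ∈ 𝒟_k} x_i K_i`. If `M = [A, f; fᵀ, γ]` is PSD, then every
`v ∈ ker A` gives a zero-energy vector `(v, 0)` of `M`, hence lies in `ker M`, so `f ⊥ ker A`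
and `f = A u`; the energy of `(u, -1)` gives `uᵀ A u ≤ γ`. The fictitious load
`g = A₁ u - f₁ = f₂ - A₂ u` vanishes off `N₁` and off `N₂`, and `[A_k, A_k u; (A_k u)ᵀ, uᵀ A_k u]`
is the congruence `[1 u]ᵀ A_k [1 u]`, so both parts are PSD with `γ₁ = uᵀ A₁ u` and the slack
`γ - uᵀ A u ≥ 0` added to `γ₂`. Conversely `M` is the sum of the two smaller block matrices. -/

theorem Matrix.exists_vecMul_eq_of_forall_mulVec_eq_zero {K ι κ : Type*} [Field K] [Fintype ι]
    [Fintype κ] {A : Matrix ι κ K} {b : κ → K} (h : ∀ v, A *ᵥ v = 0 → b ⬝ᵥ v = 0) :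
    ∃ w, w ᵥ* A = b := by
  classical
  have hb : dotProductEquiv K κ b ∈ (LinearMap.ker A.mulVecLin).dualAnnihilator := by
    simpa [Submodule.mem_dualAnnihilator] using h
  rw [← LinearMap.range_dualMap_eq_dualAnnihilator_ker] at hb
  obtain ⟨φ, hφ⟩ := hb
  obtain ⟨w, rfl⟩ := (dotProductEquiv K ι).surjective φ
  refine ⟨w, (dotProductEquiv K κ).injective (LinearMap.ext fun v => ?_)⟩
  simpa [← dotProduct_mulVec] using LinearMap.congr_fun hφ v

section ArrowMat
variable {n : ℕ}

theorem arrowMat_add (K₁ K₂ : Matrix (Fin n) (Fin n) ℝ) (b₁ b₂ : Fin n → ℝ) (c₁ c₂ : ℝ) :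
    ArrowMat (K₁ + K₂) (b₁ + b₂) (c₁ + c₂) = ArrowMat K₁ b₁ c₁ + ArrowMat K₂ b₂ c₂ := by
  simp only [ArrowMat, fromBlocks_add]
  congr 1

theorem posSemidef_arrowMat_zero_zero {c : ℝ} (hc : 0 ≤ c) :
    (ArrowMat (0 : Matrix (Fin n) (Fin n) ℝ) 0 c).PosSemidef := by
  have hdiag : ArrowMat (0 : Matrix (Fin n) (Fin n) ℝ) 0 c = diagonal (Sum.elim 0 fun _ => c) := by
    rw [← fromBlocks_diagonal, ArrowMat]
    congr 1
    ext
    simp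
  rw [hdiag, posSemidef_diagonal_iff]
  rintro (i | i) <;> simp [hc]

theorem arrowMat_mulVec_eq_conjTranspose_mul_mul {A : Matrix (Fin n) (Fin n) ℝ}
    (hA : A.IsHermitian) (u : Fin n → ℝ) :
    ArrowMat A (A *ᵥ u) (u ⬝ᵥ A *ᵥ u) =
      (fromCols 1 (replicateCol Unit u))ᴴ * A * fromCols 1 (replicateCol Unit u) := by
  rw [conjTranspose_fromCols_eq_fromRows_conjTranspose, fromRows_mul, fromRows_mul_fromCols]
  have hAt : Aᵀ = A := by simpa using hA.eq
  simp only [ArrowMat, fromBlocks_inj, Matrix.mul_one, Matrix.one_mul, conjTranspose_one,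
    conjTranspose_replicateCol, star_trivial, true_and]
  refine ⟨?_, ?_, ?_⟩ <;> ext
  · simp [mul_apply, mulVec, dotProduct]
  · rw [← vecMul_transpose, hAt]; simp [mul_apply, vecMul, dotProduct]
  · simp only [of_apply, mul_apply, replicateRow_apply, replicateCol_apply, mulVec, dotProduct,
      Finset.mul_sum, Finset.sum_mul, mul_assoc]
    exact Finset.sum_comm

theorem arrowMat_mulVec_sumElim (A : Matrix (Fin n) (Fin n) ℝ) (b v : Fin n → ℝ) (c t : ℝ) :
    ArrowMat A b c *ᵥ Sum.elim v (fun _ => t) =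
      Sum.elim (A *ᵥ v + t • b) fun _ => b ⬝ᵥ v + c * t := by
  ext (i | i) <;> simp [ArrowMat, mulVec, dotProduct, mul_comm]

theorem Matrix.PosSemidef.arrowMat_mulVec {A : Matrix (Fin n) (Fin n) ℝ} (hA : A.PosSemidef)
    {u : Fin n → ℝ} {c : ℝ} (hc : u ⬝ᵥ A *ᵥ u ≤ c) : (ArrowMat A (A *ᵥ u) c).PosSemidef := by
  have hsplit := arrowMat_add A 0 (A *ᵥ u) 0 (u ⬝ᵥ A *ᵥ u) (c - u ⬝ᵥ A *ᵥ u)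
  rw [add_zero, add_zero, add_sub_cancel] at hsplit
  rw [hsplit, arrowMat_mulVec_eq_conjTranspose_mul_mul hA.isHermitian]
  exact (hA.conjTranspose_mul_mul_same _).add (posSemidef_arrowMat_zero_zero (sub_nonneg.2 hc))

theorem Matrix.PosSemidef.exists_mulVec_eq_of_arrowMat {A : Matrix (Fin n) (Fin n) ℝ}
    {b : Fin n → ℝ} {c : ℝ} (h : (ArrowMat A b c).PosSemidef) :
    ∃ u, A *ᵥ u = b ∧ u ⬝ᵥ A *ᵥ u ≤ c := by
  have hA : A.PosSemidef := h.submatrix Sum.inl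
  have hker : ∀ v, A *ᵥ v = 0 → b ⬝ᵥ v = 0 := by
    intro v hv
    have h0 := (h.dotProduct_mulVec_zero_iff (Sum.elim v fun _ => 0)).1
      (by simp [arrowMat_mulVec_sumElim, hv])
    simpa [arrowMat_mulVec_sumElim, hv] using congrFun h0 (Sum.inr ())
  obtain ⟨u, hu⟩ := exists_vecMul_eq_of_forall_mulVec_eq_zero hker
  have hAt : Aᵀ = A := by simpa using hA.isHermitian.eq
  rw [← mulVec_transpose, hAt] at hu
  refine ⟨u, hu, ?_⟩
  rw [hu, dotProduct_comm]
  simpa [arrowMat_mulVec_sumElim, hu] using h.dotProduct_mulVec_nonneg (Sum.elim u fun _ => -1)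

end ArrowMat

section Support
variable {n : ℕ} {I J : Finset (Fin n)}

theorem MatSupportedOn.sum_smul {ι : Type*} {s : Finset ι} {K : ι → Matrix (Fin n) (Fin n) ℝ}
    (hK : ∀ i ∈ s, MatSupportedOn (K i) I) (x : ι → ℝ) :
    MatSupportedOn (∑ i ∈ s, x i • K i) I := fun i j hij => by
  rw [Matrix.sum_apply]
  exact Finset.sum_eq_zero fun k hk => by rw [Matrix.smul_apply, hK k hk i j hij, smul_zero]

theorem MatSupportedOn.mulVec {Y : Matrix (Fin n) (Fin n) ℝ} (hY : MatSupportedOn Y I)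
    (u : Fin n → ℝ) : VecSupportedOn (Y *ᵥ u) I := fun i hi => by
  simp [Matrix.mulVec, dotProduct, hY i _ (Or.inl hi)]

theorem VecSupportedOn.sub {v w : Fin n → ℝ} (hv : VecSupportedOn v I) (hw : VecSupportedOn w I) :
    VecSupportedOn (v - w) I := fun i hi => by
  rw [Pi.sub_apply, hv i hi, hw i hi, sub_zero]

theorem VecSupportedOn.inter {v : Fin n → ℝ} (hI : VecSupportedOn v I) (hJ : VecSupportedOn v J) :
    VecSupportedOn v (I ∩ J) := fun i hi => by
  rw [Finset.mem_inter, not_and_or] at hi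
  exact hi.elim (hI i) (hJ i)

end Support

theorem stmt10_general (n m : ℕ) (K : Fin m → Matrix (Fin n) (Fin n) ℝ)
    (hKpsd : ∀ i, (K i).PosSemidef)
    (D₁ D₂ : Finset (Fin m)) (hD : D₁ ∪ D₂ = Finset.univ) (hDdisj : D₁ ∩ D₂ = ∅)
    (N₁ N₂ : Finset (Fin n))
    (hK₁ : ∀ i ∈ D₁, MatSupportedOn (K i) N₁)
    (hK₂ : ∀ i ∈ D₂, MatSupportedOn (K i) N₂)
    (f₁ f₂ : Fin n → ℝ)
    (hf₁ : VecSupportedOn f₁ N₁) (hf₂ : VecSupportedOn f₂ N₂)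
    (x : Fin m → ℝ) (hx : ∀ i, 0 ≤ x i) (γ : ℝ) :
    (ArrowMat (∑ i, x i • K i) (f₁ + f₂) γ).PosSemidef ↔
      ∃ γ₁ γ₂ : ℝ, γ₁ + γ₂ = γ ∧
        ∃ g : Fin n → ℝ, VecSupportedOn g (N₁ ∩ N₂) ∧
          (ArrowMat (∑ i ∈ D₁, x i • K i) (f₁ + g) γ₁).PosSemidef ∧
          (ArrowMat (∑ i ∈ D₂, x i • K i) (f₂ - g) γ₂).PosSemidef := by
  set A₁ := ∑ i ∈ D₁, x i • K i
  set A₂ := ∑ i ∈ D₂, x i • K i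
  have hA : ∑ i, x i • K i = A₁ + A₂ := by
    rw [← Finset.sum_union (Finset.disjoint_iff_inter_eq_empty.2 hDdisj), hD]
  have hpsd (s : Finset (Fin m)) : (∑ i ∈ s, x i • K i).PosSemidef :=
    posSemidef_sum s fun i _ => (hKpsd i).smul (hx i)
  rw [hA]
  constructor
  · intro h
    obtain ⟨u, hu, hc⟩ := h.exists_mulVec_eq_of_arrowMat
    rw [add_mulVec] at hu
    rw [add_mulVec, dotProduct_add] at hc
    have hg₂ : f₂ - (A₁ *ᵥ u - f₁) = A₂ *ᵥ u := by
      rw [sub_sub_eq_add_sub, add_comm f₂, ← hu, add_sub_cancel_left]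
    refine ⟨u ⬝ᵥ A₁ *ᵥ u, γ - u ⬝ᵥ A₁ *ᵥ u, add_sub_cancel _ _, A₁ *ᵥ u - f₁, ?_, ?_, ?_⟩
    · refine VecSupportedOn.inter (((MatSupportedOn.sum_smul hK₁ x).mulVec u).sub hf₁) ?_
      rw [← sub_sub_cancel f₂ (A₁ *ᵥ u - f₁), hg₂]
      exact hf₂.sub ((MatSupportedOn.sum_smul hK₂ x).mulVec u)
    · rw [add_sub_cancel]
      exact (hpsd D₁).arrowMat_mulVec le_rfl
    · rw [hg₂]
      exact (hpsd D₂).arrowMat_mulVec (by linarith)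
  · rintro ⟨γ₁, γ₂, rfl, g, -, h₁, h₂⟩
    rw [← add_add_sub_cancel f₁ f₂ g, arrowMat_add]
    exact h₁.add h₂

/-- Semidefinite reformulation by fictitious loads. -/
theorem stmt10 (n m : ℕ) (K : Fin m → Matrix (Fin n) (Fin n) ℝ)
    (hKsymm : ∀ i, (K i).IsSymm) (hKpsd : ∀ i, (K i).PosSemidef)
    (D₁ D₂ : Finset (Fin m)) (hD : D₁ ∪ D₂ = Finset.univ) (hDdisj : D₁ ∩ D₂ = ∅)
    (N₁ N₂ : Finset (Fin n)) (hN : N₁ ∪ N₂ = Finset.univ)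
    (hK₁ : ∀ i ∈ D₁, MatSupportedOn (K i) N₁)
    (hK₂ : ∀ i ∈ D₂, MatSupportedOn (K i) N₂)
    (f₁ f₂ : Fin n → ℝ)
    (hf₁ : VecSupportedOn f₁ N₁) (hf₂ : VecSupportedOn f₂ N₂)
    (x : Fin m → ℝ) (hx : ∀ i, 0 ≤ x i) (γ : ℝ) :
    (ArrowMat (∑ i, x i • K i) (f₁ + f₂) γ).PosSemidef ↔
      ∃ γ₁ γ₂ : ℝ, γ₁ + γ₂ = γ ∧
        ∃ g : Fin n → ℝ, VecSupportedOn g (N₁ ∩ N₂) ∧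
          (ArrowMat (∑ i ∈ D₁, x i • K i) (f₁ + g) γ₁).PosSemidef ∧
          (ArrowMat (∑ i ∈ D₂, x i • K i) (f₂ - g) γ₂).PosSemidef :=
  stmt10_general n m K hKpsd D₁ D₂ hD hDdisj N₁ N₂ hK₁ hK₂ f₁ f₂ hf₁ hf₂ x hx γ
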